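/- Let H be a connected finite simple graph and f : 𝒦_H → ℕ a non-zero function such that: (1) whenever uv is an edge of H with f(H[u,v]) = 0, there exists a complete subgraph H′ of H containing the edge uv with f(H′) > 0; and (2) whenever uv is an edge of H with f(H[u]) = f(H[v]) = 0, one has f(H[u,v]) ≥ 2. Then the domination number of the bipartization B_f(H) = ((A,B),E) equals |A|, i.e., γ(B_f(H)) = |A| = |V_H|. -/

import Mathlib

/-- `K` is the vertex set of a (nonempty) complete subgraph (clique) of `H`. -/
def IsCliqueF {V : Type*} (H : SimpleGraph V) (K : Finset V) : Prop :=
  K.Nonempty ∧ ∀ x ∈ K, ∀ y ∈ K, x ≠ y → H.Adj x y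

instance {V : Type*} [DecidableEq V] (H : SimpleGraph V) [DecidableRel H.Adj] :
    DecidablePred (IsCliqueF H) := fun K => by
  unfold IsCliqueF; infer_instance

/-- The family `𝒦_H` of all complete subgraphs (cliques) of `H`. -/
abbrev CliqueSet {V : Type*} (H : SimpleGraph V) := {K : Finset V // IsCliqueF H K}

/-- The vertex type of the bipartization `B_f(H)`: the partite set `A` is `V_H`
(the `Sum.inl` part) and the partite set `B` is `⋃_K 𝓕_K`, where
`𝓕_K = {(K,1),…,(K,f K)}` is encoded as `Σ K, Fin (f K)` (the `Sum.inr` part). -/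
abbrev BVert {V : Type*} (H : SimpleGraph V) (f : Finset V → ℕ) :=
  V ⊕ (Σ K : CliqueSet H, Fin (f K.1))

/-- The bipartization `B_f(H)` of `H` with respect to `f`: a vertex `x ∈ A` is
adjacent to `(K, i) ∈ B` iff `x` is a vertex of `K`. -/
def Bip {V : Type*} (H : SimpleGraph V) (f : Finset V → ℕ) : SimpleGraph (BVert H f) where
  Adj a b :=
    (∃ (x : V) (p : Σ K : CliqueSet H, Fin (f K.1)),
        a = Sum.inl x ∧ b = Sum.inr p ∧ x ∈ p.1.1) ∨
    (∃ (x : V) (p : Σ K : CliqueSet H, Fin (f K.1)),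
        b = Sum.inl x ∧ a = Sum.inr p ∧ x ∈ p.1.1)
  symm := by
    constructor
    rintro a b (⟨x, p, rfl, rfl, hx⟩ | ⟨x, p, rfl, rfl, hx⟩)
    · exact Or.inr ⟨x, p, rfl, rfl, hx⟩
    · exact Or.inl ⟨x, p, rfl, rfl, hx⟩
  loopless := by
    constructor
    rintro a (⟨x, p, h1, h2, _⟩ | ⟨x, p, h1, h2, _⟩) <;> subst h1 <;> simp at h2

/-- `D` is a dominating set of `G`. -/
def IsDomSet {W : Type*} (G : SimpleGraph W) (D : Set W) : Prop :=
  ∀ v ∉ D, ∃ u ∈ D, G.Adj u v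

/-- The domination number `γ(G)`. -/
noncomputable def domNum {W : Type*} (G : SimpleGraph W) : ℕ :=
  sInf {n | ∃ D : Set W, IsDomSet G D ∧ D.ncard = n}

/-- `C` is a covering (vertex cover) set of `G`. -/
def IsCoverSet {W : Type*} (G : SimpleGraph W) (C : Set W) : Prop :=
  ∀ u v, G.Adj u v → u ∈ C ∨ v ∈ C

/-- The covering number `β(G)`. -/
noncomputable def coverNum {W : Type*} (G : SimpleGraph W) : ℕ :=
  sInf {n | ∃ C : Set W, IsCoverSet G C ∧ C.ncard = n}

/-- A leaf is a vertex of degree one. -/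
def IsLeaf {W : Type*} (G : SimpleGraph W) (v : W) : Prop := (G.neighborSet v).ncard = 1

/-- A support vertex is a vertex adjacent to a leaf. -/
def IsSupport {W : Type*} (G : SimpleGraph W) (v : W) : Prop := ∃ u, G.Adj v u ∧ IsLeaf G u

/-- A weak support is a vertex adjacent to exactly one leaf. -/
def IsWeakSupport {W : Type*} (G : SimpleGraph W) (v : W) : Prop :=
  {u | G.Adj v u ∧ IsLeaf G u}.ncard = 1

/-- `S` induces a block of `G`: a maximal connected subgraph without a cutvertex. -/
def IsBlock {W : Type*} (G : SimpleGraph W) (S : Set W) : Prop :=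
  S.Nonempty ∧ (G.induce S).Connected ∧
    (∀ v ∈ S, S = {v} ∨ (G.induce (S \ {v})).Connected) ∧
    ∀ T : Set W, S ⊆ T → (G.induce T).Connected →
      (∀ v ∈ T, T = {v} ∨ (G.induce (T \ {v})).Connected) → S = T
/-!
Taking all of `A` shows `γ ≤ |A|`. Conversely, given a dominating set `D`, charge every vertex
`v ∉ D` to a copy in `D` adjacent to it: the copy of `H[v]` if `f(H[v]) ≥ 1`; otherwise, if `v` has
a neighbour `u ∉ D` with `f(H[u]) = 0`, one of the (by hypothesis at least two) copies of `H[v,u]`,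
the two ends getting different copies; otherwise any copy dominating `v`. The first two kinds of
copies lie in `D` because their vertices are all outside `D`. Two distinct vertices charged to the
same copy would be adjacent, both outside `D` and with `f = 0`, hence both of the second kind and
charged different copies of the same edge. So `v ↦ v` on `D ∩ A`, extended by the charge, is an
injection `A → D`.
-/

open Function

section Domination

variable {W : Type*} {G : SimpleGraph W}

lemma isDomSet_univ : IsDomSet G Set.univ := fun _ hv => absurd (Set.mem_univ _) hv

lemma IsDomSet.domNum_le {D : Set W} (hD : IsDomSet G D) : domNum G ≤ D.ncard :=
  Nat.sInf_le ⟨D, hD, rfl⟩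

lemma le_domNum {n : ℕ} (h : ∀ D, IsDomSet G D → n ≤ D.ncard) : n ≤ domNum G :=
  le_csInf ⟨_, _, isDomSet_univ, rfl⟩ (by rintro _ ⟨D, hD, rfl⟩; exact h D hD)

end Domination

section Bipartization

variable {V : Type*} {H : SimpleGraph V} {f : Finset V → ℕ}

lemma isCliqueF_singleton (v : V) : IsCliqueF H {v} :=
  ⟨Finset.singleton_nonempty v, by simp +contextual⟩

lemma SimpleGraph.Adj.isCliqueF_pair [DecidableEq V] {u v : V} (h : H.Adj u v) :
    IsCliqueF H {u, v} := by
  refine ⟨Finset.insert_nonempty u {v}, fun x hx y hy hxy => ?_⟩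
  simp only [Finset.mem_insert, Finset.mem_singleton] at hx hy
  rcases hx with rfl | rfl <;> rcases hy with rfl | rfl
  exacts [absurd rfl hxy, h, h.symm, absurd rfl hxy]

@[simp]
lemma bip_adj_inl_inr {x : V} {p : Σ K : CliqueSet H, Fin (f K.1)} :
    (Bip H f).Adj (Sum.inl x) (Sum.inr p) ↔ x ∈ p.1.1 := by
  refine ⟨?_, fun hx => Or.inl ⟨x, p, rfl, rfl, hx⟩⟩
  rintro (⟨y, q, hy, hq, hyq⟩ | ⟨y, q, hy, -, -⟩)
  · cases hy; cases hq; exact hyq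
  · cases hy

@[simp]
lemma bip_adj_inr_inl {x : V} {p : Σ K : CliqueSet H, Fin (f K.1)} :
    (Bip H f).Adj (Sum.inr p) (Sum.inl x) ↔ x ∈ p.1.1 :=
  (Bip H f).adj_comm _ _ |>.trans bip_adj_inl_inr

@[simp]
lemma bip_not_adj_inl_inl {x y : V} : ¬ (Bip H f).Adj (Sum.inl x) (Sum.inl y) := by
  simp [Bip]

@[simp]
lemma bip_not_adj_inr_inr {p q : Σ K : CliqueSet H, Fin (f K.1)} :
    ¬ (Bip H f).Adj (Sum.inr p) (Sum.inr q) := by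
  simp [Bip]

lemma isDomSet_range_inl : IsDomSet (Bip H f) (Set.range Sum.inl) := by
  rintro (x | p) hb
  · exact absurd ⟨x, rfl⟩ hb
  · obtain ⟨x, hx⟩ := p.1.2.1
    exact ⟨Sum.inl x, ⟨x, rfl⟩, bip_adj_inl_inr.mpr hx⟩

variable {D : Set (BVert H f)}

lemma IsDomSet.inr_mem {p : Σ K : CliqueSet H, Fin (f K.1)} (hD : IsDomSet (Bip H f) D)
    (h : ∀ x ∈ p.1.1, Sum.inl x ∉ D) : Sum.inr p ∈ D := by
  by_contra hp
  obtain ⟨x | q, hu, hadj⟩ := hD _ hp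
  · exact h x (bip_adj_inl_inr.mp hadj) hu
  · exact bip_not_adj_inr_inr hadj

lemma IsDomSet.exists_inr_mem {v : V} (hD : IsDomSet (Bip H f) D) (hv : Sum.inl v ∉ D) :
    ∃ p : Σ K : CliqueSet H, Fin (f K.1), Sum.inr p ∈ D ∧ v ∈ p.1.1 := by
  obtain ⟨x | p, hu, hadj⟩ := hD _ hv
  · exact absurd hadj bip_not_adj_inl_inl
  · exact ⟨p, hu, bip_adj_inr_inl.mp hadj⟩

variable (D) in
def HasZeroNeighborOutside (v : V) : Prop :=
  ∃ u, H.Adj v u ∧ Sum.inl u ∉ D ∧ f {u} = 0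

variable [DecidableEq V]

variable (D) in
def IsCharge (r : V → V → Prop) (v : V) (p : Σ K : CliqueSet H, Fin (f K.1)) : Prop :=
  Sum.inr p ∈ D ∧ v ∈ p.1.1 ∧ (1 ≤ f {v} → p.1.1 = {v}) ∧
    (f {v} = 0 → HasZeroNeighborOutside D v →
      ∃ u, p.1.1 = {v, u} ∧ ((p.2 : ℕ) = 0 ↔ r v u))

lemma IsDomSet.exists_isCharge (r : V → V → Prop)
    (h2 : ∀ u v : V, H.Adj u v → f {u} = 0 → f {v} = 0 → 2 ≤ f {u, v})
    (hD : IsDomSet (Bip H f) D) {v : V} (hv : Sum.inl v ∉ D) :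
    ∃ p, IsCharge D r v p := by
  classical
  by_cases hfv : 1 ≤ f {v}
  · refine ⟨⟨⟨{v}, isCliqueF_singleton v⟩, ⟨0, hfv⟩⟩, hD.inr_mem ?_, by simp,
      fun _ => rfl, fun h => by omega⟩
    simpa using hv
  by_cases hzero : HasZeroNeighborOutside D v
  · obtain ⟨u, hvu, hu, hfu⟩ := hzero
    have hf : 2 ≤ f {v, u} := h2 v u hvu (by omega) hfu
    -- the two copies of `{v, u}` go to its two ends, in the order given by `r`
    refine ⟨⟨⟨{v, u}, hvu.isCliqueF_pair⟩,
      (if r v u then ⟨0, by omega⟩ else ⟨1, by omega⟩ : Fin (f {v, u}))⟩,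
      hD.inr_mem ?_, by simp, fun h => absurd h hfv, fun _ _ => ⟨u, rfl, ?_⟩⟩
    · simp [hv, hu]
    · split_ifs <;> simp [*]
  · obtain ⟨p, hp, hvp⟩ := hD.exists_inr_mem hv
    exact ⟨p, hp, hvp, fun h => absurd h hfv, fun _ h => absurd h hzero⟩

lemma IsCharge.eq {r : V → V → Prop} [Std.Trichotomous r] [Std.Asymm r] {v w : V}
    {p : Σ K : CliqueSet H, Fin (f K.1)} (hv : Sum.inl v ∉ D) (hw : Sum.inl w ∉ D)
    (hpv : IsCharge D r v p) (hpw : IsCharge D r w p) : v = w := by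
  by_contra hvw
  obtain ⟨-, hvp, hv1, hv0⟩ := hpv
  obtain ⟨-, hwp, hw1, hw0⟩ := hpw
  have hadj : H.Adj v w := p.1.2.2 v hvp w hwp hvw
  have hfv : f {v} = 0 := by
    by_contra h
    exact hvw (Finset.mem_singleton.mp (hv1 (by omega) ▸ hwp)).symm
  have hfw : f {w} = 0 := by
    by_contra h
    exact hvw (Finset.mem_singleton.mp (hw1 (by omega) ▸ hvp))
  obtain ⟨u, hpu, hvu⟩ := hv0 hfv ⟨w, hadj, hw, hfw⟩
  obtain ⟨u', hpu', hwu'⟩ := hw0 hfw ⟨v, hadj.symm, hv, hfv⟩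
  obtain rfl : w = u := by simpa [hpu, Ne.symm hvw] using hwp
  obtain rfl : v = u' := by simpa [hpu', hvw] using hvp
  have hiff : r v w ↔ r w v := hvu.symm.trans hwu'
  rcases trichotomous_of r v w with h | h | h
  · exact asymm h (hiff.mp h)
  · exact hvw h
  · exact asymm h (hiff.mpr h)

lemma IsDomSet.exists_injective
    (h2 : ∀ u v : V, H.Adj u v → f {u} = 0 → f {v} = 0 → 2 ≤ f {u, v})
    (hD : IsDomSet (Bip H f) D) :
    ∃ Ψ : V → BVert H f, Injective Ψ ∧ ∀ v, Ψ v ∈ D := by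
  classical
  have hcharge := fun v (hv : Sum.inl v ∉ D) => hD.exists_isCharge WellOrderingRel h2 hv
  choose c hc using hcharge
  let Ψ : V → BVert H f := fun v => if hv : Sum.inl v ∈ D then Sum.inl v else Sum.inr (c v hv)
  refine ⟨Ψ, fun v w hΨ => ?_, fun v => ?_⟩
  · by_cases hv : Sum.inl v ∈ D <;> by_cases hw : Sum.inl w ∈ D <;>
      simp only [Ψ, hv, hw, dite_true, dite_false, Sum.inl.injEq, reduceCtorEq,
        Sum.inr.injEq] at hΨ
    · exact hΨ
    · exact IsCharge.eq hv hw (hc v hv) (hΨ ▸ hc w hw)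
  · by_cases hv : Sum.inl v ∈ D
    · simp [Ψ, hv]
    · simpa [Ψ, hv] using (hc v hv).1

lemma IsDomSet.card_le_ncard
    (h2 : ∀ u v : V, H.Adj u v → f {u} = 0 → f {v} = 0 → 2 ≤ f {u, v})
    (hD : IsDomSet (Bip H f) D) : Nat.card V ≤ D.ncard := by
  rcases finite_or_infinite V with hV | hV
  · obtain ⟨Ψ, hΨ, hΨD⟩ := hD.exists_injective h2
    rw [← Set.ncard_univ]
    exact Set.ncard_le_ncard_of_injOn Ψ (fun v _ => hΨD v) hΨ.injOn (Set.toFinite D)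
  · simp [Nat.card_eq_zero_of_infinite]

end Bipartization

theorem bip_domNum_eq_general {V : Type*} [DecidableEq V]
    (H : SimpleGraph V) (f : Finset V → ℕ)
    (h2 : ∀ u v : V, H.Adj u v → f {u} = 0 → f {v} = 0 → 2 ≤ f {u, v}) :
    domNum (Bip H f) = Nat.card V := by
  refine le_antisymm ?_ (le_domNum fun D hD => hD.card_le_ncard h2)
  calc domNum (Bip H f) ≤ (Set.range (Sum.inl : V → BVert H f)).ncard :=
        isDomSet_range_inl.domNum_le
    _ = Nat.card V := Set.ncard_range_of_injective Sum.inl_injective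

theorem bip_domNum_eq {V : Type*} [Fintype V] [DecidableEq V]
    (H : SimpleGraph V) (f : Finset V → ℕ) (hconn : H.Connected)
    (hnz : ∃ K : Finset V, IsCliqueF H K ∧ 1 ≤ f K)
    (h1 : ∀ u v : V, H.Adj u v → f {u, v} = 0 →
      ∃ K : Finset V, IsCliqueF H K ∧ u ∈ K ∧ v ∈ K ∧ 0 < f K)
    (h2 : ∀ u v : V, H.Adj u v → f {u} = 0 → f {v} = 0 → 2 ≤ f {u, v}) :
    domNum (Bip H f) = Nat.card V :=
  bip_domNum_eq_general H f h2
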